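/- (Locality of the Retro* update.) Let T and T' be AND-OR synthesis trees that are identical except for the subtree rooted at the molecule node at a fixed position π (as produced by expanding the frontier leaf at π). Then: (i) for every node position that is neither a prefix of π nor an extension of π, the rn_V values at that position in T and T' are equal; and (ii) if σ is a proper prefix of π at which rn_V in T equals rn_V in T', then rn_V in T equals rn_V in T' at every prefix of σ as well (so the bottom-up propagation of reaction-number updates may stop as soon as an ancestor's value is unchanged). -/

import Mathlib

inductive Mol (M : Type) where
  | frontier : M → Mol M
  | node : (ℝ × List (Mol M)) → List (ℝ × List (Mol M)) → Mol M

mutual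
noncomputable def rn {M : Type} (V : M → ℝ) : Mol M → ℝ
  | .frontier m => V m
  | .node r rs => (rs.attach.map fun ⟨R, _⟩ => rnR V R).foldr min (rnR V r)
termination_by u => sizeOf u
decreasing_by
  · simp; omega
  · have := List.sizeOf_lt_of_mem ‹R ∈ rs›; simp; omega

noncomputable def rnR {M : Type} (V : M → ℝ) : ℝ × List (Mol M) → ℝ
  | (c, ms) => c + (ms.attach.map fun ⟨u, _⟩ => rn V u).sum
termination_by R => sizeOf R
decreasing_by
  · have := List.sizeOf_lt_of_mem ‹u ∈ ms›; simp; omega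
end

mutual
/-- The node (molecule `inl` or reaction `inr`) at a position of the tree; a
position is a root-to-node path given by successive child indices, alternately
selecting a reaction child of a molecule node and a molecule child of a
reaction node. -/
def nodeAtM {M : Type} : Mol M → List ℕ → Option (Mol M ⊕ (ℝ × List (Mol M)))
  | u, [] => some (Sum.inl u)
  | .frontier _, _ :: _ => none
  | .node r rs, i :: p =>
    match (r :: rs)[i]? with
    | none => none
    | some R => nodeAtR R p
termination_by _ p => p.length

def nodeAtR {M : Type} : (ℝ × List (Mol M)) → List ℕ → Option (Mol M ⊕ (ℝ × List (Mol M)))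
  | R, [] => some (Sum.inr R)
  | R, j :: p =>
    match R.2[j]? with
    | none => none
    | some u => nodeAtM u p
termination_by _ p => p.length
end

mutual
/-- Replace the molecule node at a given position by `s` (no-op on invalid
positions and on positions addressing a reaction node). -/
def replaceM {M : Type} : Mol M → List ℕ → Mol M → Mol M
  | _, [], s => s
  | .frontier m, _ :: _, _ => .frontier m
  | .node r rs, 0 :: p, s => .node (replaceR r p s) rs
  | .node r rs, (i + 1) :: p, s => .node r (rs.modify i (fun R => replaceR R p s))
termination_by _ p _ => p.length

def replaceR {M : Type} : (ℝ × List (Mol M)) → List ℕ → Mol M → (ℝ × List (Mol M))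
  | R, [], _ => R
  | (c, ms), j :: p, s => (c, ms.modify j (fun u => replaceM u p s))
termination_by _ p _ => p.length
end

/-- The reaction number of the node at a given position, if it exists. -/
noncomputable def rnAt {M : Type} (V : M → ℝ) (T : Mol M) (p : List ℕ) : Option ℝ :=
  (nodeAtM T p).map (Sum.elim (rn V) (rnR V))

/-! Positions that are neither ancestors nor descendants of `π` address the same node in `T` and
in `replaceM T π s`. Along `π`, the reaction number of a node depends on the one child lying on
`π` only through that child's reaction number (a `min` at molecule nodes, a sum at reaction
nodes); so if the values agree at `σ` they agree at its parent, and inductively at every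
ancestor. -/

theorem List.map_modify_eq_map {α β : Type*} (g : α → β) (f : α → α) (i : ℕ) (l : List α)
    (h : ∀ x, l[i]? = some x → g (f x) = g x) : (l.modify i f).map g = l.map g := by
  refine List.ext_getElem? fun n => ?_
  simp only [List.getElem?_map, List.getElem?_modify]
  by_cases hin : i = n
  · subst hin
    cases hx : l[i]? with
    | none => simp
    | some x => simp [h x hx]
  · simp [hin]

namespace Mol

variable {M : Type}

theorem rn_node (V : M → ℝ) (r : ℝ × List (Mol M)) (rs : List (ℝ × List (Mol M))) :
    rn V (.node r rs) = (rs.map (rnR V)).foldr min (rnR V r) := by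
  rw [rn]
  simp

theorem rnR_mk (V : M → ℝ) (c : ℝ) (ms : List (Mol M)) :
    rnR V (c, ms) = c + (ms.map (rn V)).sum := by
  rw [rnR]
  simp

abbrev Node (M : Type) := Mol M ⊕ (ℝ × List (Mol M))

def nodeAt : Node M → List ℕ → Option (Node M) := Sum.elim nodeAtM nodeAtR

def replaceAt (X : Node M) (p : List ℕ) (s : Mol M) : Node M :=
  Sum.map (replaceM · p s) (replaceR · p s) X

def child : Node M → ℕ → Option (Node M)
  | .inl (.frontier _), _ => none
  | .inl (.node r rs), i => (r :: rs)[i]?.map .inr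
  | .inr R, j => R.2[j]?.map .inl

noncomputable def rnNode (V : M → ℝ) : Node M → ℝ := Sum.elim (rn V) (rnR V)

theorem rnAt_eq_map_nodeAt (V : M → ℝ) (T : Mol M) (p : List ℕ) :
    rnAt V T p = (nodeAt (.inl T) p).map (rnNode V) := rfl

theorem replaceAt_inl (T : Mol M) (p : List ℕ) (s : Mol M) :
    replaceAt (.inl T) p s = .inl (replaceM T p s) := rfl

theorem nodeAt_nil (X : Node M) : nodeAt X [] = some X := by
  rcases X with u | R <;> simp [nodeAt, nodeAtM, nodeAtR]

theorem nodeAt_cons (X : Node M) (i : ℕ) (p : List ℕ) :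
    nodeAt X (i :: p) = (child X i).bind (nodeAt · p) := by
  rcases X with (_ | ⟨r, rs⟩) | R
  · simp [nodeAt, nodeAtM, child]
  · simp only [nodeAt, Sum.elim_inl, nodeAtM, child]
    cases (r :: rs)[i]? <;> rfl
  · simp only [nodeAt, Sum.elim_inr, nodeAtR, child]
    cases R.2[i]? <;> rfl

theorem nodeAt_append (X : Node M) (a b : List ℕ) :
    nodeAt X (a ++ b) = (nodeAt X a).bind (nodeAt · b) := by
  induction a generalizing X with
  | nil => simp [nodeAt_nil]
  | cons i a ih => simp [nodeAt_cons, ih, Option.bind_assoc]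

theorem child_replaceAt_cons_self (X : Node M) (i : ℕ) (p : List ℕ) (s : Mol M) :
    child (replaceAt X (i :: p) s) i = (child X i).map (replaceAt · p s) := by
  rcases X with (_ | ⟨r, rs⟩) | ⟨c, ms⟩
  · simp [replaceAt, replaceM, child]
  · cases i <;> simp [replaceAt, replaceM, child, Option.map_map, Function.comp_def]
  · simp [replaceAt, replaceR, child, Option.map_map, Function.comp_def]

theorem child_replaceAt_cons_of_ne {i j : ℕ} (hij : i ≠ j) (X : Node M) (p : List ℕ)
    (s : Mol M) : child (replaceAt X (i :: p) s) j = child X j := by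
  rcases X with (_ | ⟨r, rs⟩) | ⟨c, ms⟩
  · simp [replaceAt, replaceM, child]
  · cases i <;> cases j <;> simp_all [replaceAt, replaceM, child]
  · simp [replaceAt, replaceR, child, hij]

theorem nodeAt_replaceAt_append (X : Node M) (a b : List ℕ) (s : Mol M) :
    nodeAt (replaceAt X (a ++ b) s) a = (nodeAt X a).map (replaceAt · b s) := by
  induction a generalizing X with
  | nil => simp [nodeAt_nil]
  | cons i a ih =>
    simp [nodeAt_cons, child_replaceAt_cons_self, Option.bind_map, ih, Option.map_bind]

theorem nodeAt_replaceAt_of_not_prefix (X : Node M) (π p : List ℕ) (s : Mol M)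
    (hpπ : ¬ p <+: π) (hπp : ¬ π <+: p) : nodeAt (replaceAt X π s) p = nodeAt X p := by
  induction π generalizing X p with
  | nil => exact absurd List.nil_prefix hπp
  | cons i π ih =>
    obtain _ | ⟨j, p⟩ := p
    · exact absurd List.nil_prefix hpπ
    rw [nodeAt_cons, nodeAt_cons]
    by_cases hij : i = j
    · subst hij
      simp only [List.cons_prefix_cons, true_and] at hpπ hπp
      rw [child_replaceAt_cons_self]
      cases child X i with
      | none => rfl
      | some Y => exact ih Y p hpπ hπp
    · rw [child_replaceAt_cons_of_ne hij]

theorem rnNode_replaceAt_cons (V : M → ℝ) (X : Node M) (i : ℕ) (p : List ℕ) (s : Mol M)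
    (h : ∀ Y, child X i = some Y → rnNode V (replaceAt Y p s) = rnNode V Y) :
    rnNode V (replaceAt X (i :: p) s) = rnNode V X := by
  rcases X with (_ | ⟨r, rs⟩) | ⟨c, ms⟩
  · simp [replaceAt, replaceM]
  · cases i with
    | zero =>
      simp only [replaceAt, Sum.map_inl, replaceM, rnNode, Sum.elim_inl, rn_node]
      rw [show rnR V (replaceR r p s) = rnR V r from h (.inr r) rfl]
    | succ i =>
      simp only [replaceAt, Sum.map_inl, replaceM, rnNode, Sum.elim_inl, rn_node]
      rw [List.map_modify_eq_map]
      intro R hR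
      exact h (.inr R) (by simp [child, hR])
  · simp only [replaceAt, Sum.map_inr, replaceR, rnNode, Sum.elim_inr, rnR_mk]
    rw [List.map_modify_eq_map]
    intro u hu
    exact h (.inl u) (by simp [child, hu])

theorem rnNode_replaceAt_append_of_map_nodeAt (V : M → ℝ) (X : Node M) (a b : List ℕ)
    (s : Mol M)
    (h : (nodeAt X a).map (rnNode V) = (nodeAt X a).map (rnNode V ∘ (replaceAt · b s))) :
    rnNode V (replaceAt X (a ++ b) s) = rnNode V X := by
  induction a generalizing X with
  | nil => simpa [nodeAt_nil] using h.symm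
  | cons i a ih =>
    refine rnNode_replaceAt_cons V X i _ s fun Y hY => ih Y ?_
    simpa [nodeAt_cons, hY] using h

theorem map_nodeAt_rnNode_of_append (V : M → ℝ) (X : Node M) (τ ρ b : List ℕ) (s : Mol M)
    (h : (nodeAt X (τ ++ ρ)).map (rnNode V) =
      (nodeAt X (τ ++ ρ)).map (rnNode V ∘ (replaceAt · b s))) :
    (nodeAt X τ).map (rnNode V) = (nodeAt X τ).map (rnNode V ∘ (replaceAt · (ρ ++ b) s)) := by
  rw [nodeAt_append] at h
  cases hY : nodeAt X τ with
  | none => rfl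
  | some Y =>
    simp only [hY, Option.bind_some] at h
    simp [rnNode_replaceAt_append_of_map_nodeAt V Y ρ b s h]

end Mol

theorem retroStar_update_local {M : Type} (V : M → ℝ) (T T' : Mol M)
    (π : List ℕ) (s : Mol M)
    (hmol : ∃ u : Mol M, nodeAtM T π = some (Sum.inl u))
    (hT' : T' = replaceM T π s) :
    (∀ p : List ℕ, ¬ p <+: π → ¬ π <+: p → rnAt V T p = rnAt V T' p) ∧
    (∀ σ : List ℕ, σ <+: π → σ ≠ π → rnAt V T σ = rnAt V T' σ →
      ∀ τ : List ℕ, τ <+: σ → rnAt V T τ = rnAt V T' τ) := by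
  subst hT'
  simp only [Mol.rnAt_eq_map_nodeAt, ← Mol.replaceAt_inl]
  constructor
  · intro p hpπ hπp
    rw [Mol.nodeAt_replaceAt_of_not_prefix _ π p s hpπ hπp]
  · rintro σ ⟨b, rfl⟩ - hσ τ ⟨ρ, rfl⟩
    rw [Mol.nodeAt_replaceAt_append, Option.map_map] at hσ
    rw [List.append_assoc, Mol.nodeAt_replaceAt_append, Option.map_map]
    exact Mol.map_nodeAt_rnNode_of_append V _ τ ρ b s hσ
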